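/- (Theorem 3, sufficient condition for generalization) Let p be an absolutely continuous probability density on ℝ^K supported inside the hypercube [−U, U]^K. Let the target f : ℝ^K → ℝ be smooth with |∂^α f(y)| ≤ B^{|α|} H for every multi-index α and every y ∈ ℝ^K, for some B, H > 0. For each N, let X_1,…,X_N be i.i.d. random vectors with density p, and let f̂_N : ℝ^K → ℝ be any (random) model that is smooth with |∂^α f̂_N(y)| ≤ (B')^{|α|} H for every α and y, for a fixed B' > 0, and that achieves zero empirical risk: f̂_N(X_i) = f(X_i) for all i = 1,…,N. Then the expected risk ∫_{ℝ^K} |f̂_N(x) − f(x)|² p(x) dx converges to 0 in probability as N → ∞. -/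

import Mathlib

open MeasureTheory

/-- Single partial derivative in coordinate direction `k`. -/
noncomputable def pderiv1 {K : ℕ} (k : Fin K) (f : (Fin K → ℝ) → ℝ) : (Fin K → ℝ) → ℝ :=
  fun x => fderiv ℝ f x (Pi.single k 1)

/-- Mixed partial derivative `∂^α f` for a multi-index `α : Fin K → ℕ`. -/
noncomputable def mpderiv {K : ℕ} (α : Fin K → ℕ) (f : (Fin K → ℝ) → ℝ) :
    (Fin K → ℝ) → ℝ :=
  (List.finRange K).foldr (fun k g => (pderiv1 k)^[α k] g) f

lemma foldr_count {K : ℕ} (k : Fin K) (f : (Fin K → ℝ) → ℝ) (l : List (Fin K)) :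
    l.foldr (fun j g => (pderiv1 j)^[(Pi.single k 1 : Fin K → ℕ) j] g) f
      = (pderiv1 k)^[l.count k] f := by
  induction l with
  | nil => simp
  | cons j t ih =>
    rcases eq_or_ne j k with h | h
    · subst h
      simp only [List.foldr_cons, ih, List.count_cons_self, Pi.single_eq_same,
        Function.iterate_one, Function.iterate_succ_apply', Function.iterate_zero, id_eq]
    · simp only [List.foldr_cons, ih, List.count_cons_of_ne h,
        Pi.single_eq_of_ne h, Function.iterate_zero, id_eq]

lemma mpderiv_zero {K : ℕ} (f : (Fin K → ℝ) → ℝ) : mpderiv (0 : Fin K → ℕ) f = f := by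
  unfold mpderiv
  induction (List.finRange K) with
  | nil => rfl
  | cons j t ih => simp [ih]

lemma mpderiv_single {K : ℕ} (k : Fin K) (f : (Fin K → ℝ) → ℝ) :
    mpderiv (Pi.single k 1) f = pderiv1 k f := by
  unfold mpderiv
  rw [foldr_count, List.count_eq_one_of_mem (List.nodup_finRange K) (List.mem_finRange k)]
  rfl

lemma sum_single_one {K : ℕ} (k : Fin K) : (∑ j, (Pi.single k 1 : Fin K → ℕ) j) = 1 := by
  simp [Finset.sum_pi_single']

lemma fderiv_norm_bound {K : ℕ} {g : (Fin K → ℝ) → ℝ} {C : ℝ} (hC : 0 ≤ C)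
    (hgd : ∀ (k : Fin K) (x), |fderiv ℝ g x (Pi.single k 1)| ≤ C)
    (x : Fin K → ℝ) : ‖fderiv ℝ g x‖ ≤ K * C := by
  apply ContinuousLinearMap.opNorm_le_bound _ (by positivity)
  intro v
  have hv : v = ∑ j, v j • (Pi.single j 1 : Fin K → ℝ) := by
    funext m
    simp [Finset.sum_apply, Pi.single_apply]
  calc ‖fderiv ℝ g x v‖ = ‖∑ j, v j • fderiv ℝ g x (Pi.single j 1)‖ := by
        conv_lhs => rw [hv]
        rw [map_sum]
        simp
    _ ≤ ∑ j, ‖v j • fderiv ℝ g x (Pi.single j 1)‖ := norm_sum_le _ _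
    _ ≤ ∑ j : Fin K, ‖v‖ * C := by
        refine Finset.sum_le_sum fun j _ => ?_
        rw [norm_smul]
        exact mul_le_mul (norm_le_pi_norm v j) (hgd j x) (norm_nonneg _) (norm_nonneg _)
    _ = K * C * ‖v‖ := by simp [Finset.sum_const]; ring

/-- **Theorem 3 (sufficient condition for generalization).**  Let `p` be a probability
density supported inside `[−U, U]^K`, let the target `f` be smooth and bandlimited by
`B` with height `H` (in the Bernstein-derivative sense), and for each `N` let
`f̂_N` be any model, depending on the i.i.d. samples `X_1, …, X_N ∼ p`, that is smooth
and bandlimited by `B'` with height `H`, and that achieves zero empirical risk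
(`f̂_N(X_i) = f(X_i)` for all `i`).  Then the expected risk
`∫ |f̂_N(x) − f(x)|² p(x) dx` tends to `0` in probability as `N → ∞`. -/
theorem generalization_sufficient_condition {K : ℕ} (U B B' H : ℝ)
    (hU : 0 < U) (hB : 0 < B) (hB' : 0 < B') (hH : 0 < H)
    (p : (Fin K → ℝ) → ℝ) (hp_meas : Measurable p) (hp_nonneg : ∀ x, 0 ≤ p x)
    (hp_one : ∫ x : Fin K → ℝ, p x = 1)
    (hp_supp : ∀ x : Fin K → ℝ, (∃ k, U < |x k|) → p x = 0)
    (f : (Fin K → ℝ) → ℝ) (hf : ContDiff ℝ (⊤ : ℕ∞) f)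
    (hfB : ∀ (α : Fin K → ℕ) (y : Fin K → ℝ),
      |mpderiv α f y| ≤ B ^ (∑ k, α k) * H)
    (fhat : (N : ℕ) → (Fin N → (Fin K → ℝ)) → ((Fin K → ℝ) → ℝ))
    (hfhat_smooth : ∀ (N : ℕ) (xs : Fin N → Fin K → ℝ), ContDiff ℝ (⊤ : ℕ∞) (fhat N xs))
    (hfhatB : ∀ (N : ℕ) (xs : Fin N → Fin K → ℝ) (α : Fin K → ℕ) (y : Fin K → ℝ),
      |mpderiv α (fhat N xs) y| ≤ B' ^ (∑ k, α k) * H)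
    (hinterp : ∀ (N : ℕ) (xs : Fin N → Fin K → ℝ) (i : Fin N),
      fhat N xs (xs i) = f (xs i)) :
    ∀ δ : ℝ, 0 < δ →
      Filter.Tendsto
        (fun N : ℕ =>
          (Measure.pi fun _ : Fin N =>
              volume.withDensity fun x => ENNReal.ofReal (p x))
            {xs : Fin N → Fin K → ℝ |
              δ < ∫ x : Fin K → ℝ, (fhat N xs x - f x) ^ 2 * p x})
        Filter.atTop (nhds 0) := by
  classical
  intro δ hδ
  set μ : Measure (Fin K → ℝ) := volume.withDensity (fun x => ENNReal.ofReal (p x)) with hμdef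
  have hp_int : Integrable p (volume : Measure (Fin K → ℝ)) := by
    by_contra h
    rw [integral_undef h] at hp_one
    norm_num at hp_one
  have hμ_univ : μ Set.univ = 1 := by
    rw [hμdef, withDensity_apply _ MeasurableSet.univ, setLIntegral_univ,
      ← ofReal_integral_eq_lintegral_ofReal hp_int (Filter.Eventually.of_forall hp_nonneg),
      hp_one, ENNReal.ofReal_one]
  haveI : IsProbabilityMeasure μ := ⟨hμ_univ⟩
  set C1 : ℝ := (B + B') * H with hC1def
  have hC1 : 0 ≤ C1 := by positivity
  set M : ℝ := K * C1 + 1 with hMdef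
  have hM : 0 < M := by positivity
  set r : ℝ := Real.sqrt δ / M with hrdef
  have hr : 0 < r := div_pos (Real.sqrt_pos.2 hδ) hM
  have hQc : IsCompact (Set.univ.pi fun _ : Fin K => Set.Icc (-U) U) :=
    isCompact_univ_pi fun _ => isCompact_Icc
  obtain ⟨t, ht⟩ := hQc.elim_finite_subcover (fun c : Fin K → ℝ => Metric.ball c (r / 2))
    (fun _ => Metric.isOpen_ball)
    (fun x _ => Set.mem_iUnion.2 ⟨x, Metric.mem_ball_self (by positivity)⟩)
  set J : Finset (Fin K → ℝ) := t.filter (fun c => 0 < μ (Metric.ball c (r / 2))) with hJdef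
  -- deterministic key claim
  have hkey : ∀ (N : ℕ) (xs : Fin N → Fin K → ℝ),
      (∀ c ∈ J, ∃ i, xs i ∈ Metric.ball c (r / 2)) →
      (∫ x : Fin K → ℝ, (fhat N xs x - f x) ^ 2 * p x) ≤ δ := by
    intro N xs hgood
    set g : (Fin K → ℝ) → ℝ := fun x => fhat N xs x - f x with hgdef
    have hgdiff : Differentiable ℝ g :=
      ((hfhat_smooth N xs).differentiable (by simp)).sub (hf.differentiable (by simp))
    have hcont : Continuous g := hgdiff.continuous
    have hgH : ∀ x, |g x| ≤ 2 * H := by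
      intro x
      have h1 := hfB 0 x
      have h2 := hfhatB N xs 0 x
      rw [mpderiv_zero] at h1 h2
      simp only [Pi.zero_apply, Finset.sum_const_zero, pow_zero, one_mul] at h1 h2
      have : |g x| ≤ |fhat N xs x| + |f x| := by
        simpa [hgdef, Real.norm_eq_abs] using norm_sub_le (fhat N xs x) (f x)
      linarith
    have hglip : ∀ x y : Fin K → ℝ, |g x - g y| ≤ M * dist x y := by
      intro x y
      have hb : ∀ (k : Fin K) (z : Fin K → ℝ), |fderiv ℝ g z (Pi.single k 1)| ≤ C1 := by
        intro k z
        have hsub : fderiv ℝ g z = fderiv ℝ (fhat N xs) z - fderiv ℝ f z :=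
          fderiv_sub ((hfhat_smooth N xs).differentiable (by simp) z)
            (hf.differentiable (by simp) z)
        have h1 := hfB (Pi.single k 1) z
        have h2 := hfhatB N xs (Pi.single k 1) z
        rw [mpderiv_single, sum_single_one, pow_one] at h1 h2
        have e1 : pderiv1 k f z = fderiv ℝ f z (Pi.single k 1) := rfl
        have e2 : pderiv1 k (fhat N xs) z = fderiv ℝ (fhat N xs) z (Pi.single k 1) := rfl
        rw [e1] at h1
        rw [e2] at h2
        rw [hsub]
        simp only [ContinuousLinearMap.sub_apply]
        have htri : |fderiv ℝ (fhat N xs) z (Pi.single k 1) - fderiv ℝ f z (Pi.single k 1)|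
            ≤ |fderiv ℝ (fhat N xs) z (Pi.single k 1)| + |fderiv ℝ f z (Pi.single k 1)| := by
          simpa [Real.norm_eq_abs] using
            norm_sub_le (fderiv ℝ (fhat N xs) z (Pi.single k 1)) (fderiv ℝ f z (Pi.single k 1))
        rw [hC1def]
        linarith [htri]
      have hmv := Convex.norm_image_sub_le_of_norm_fderiv_le (f := g) (s := Set.univ)
        (fun z _ => hgdiff z) (fun z _ => fderiv_norm_bound hC1 hb z) convex_univ
        (Set.mem_univ y) (Set.mem_univ x)
      have h1 : |g x - g y| ≤ (K * C1) * ‖x - y‖ := by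
        simpa [Real.norm_eq_abs] using hmv
      have h2 : (K * C1) * ‖x - y‖ ≤ M * ‖x - y‖ :=
        mul_le_mul_of_nonneg_right (by rw [hMdef]; linarith) (norm_nonneg _)
      rw [dist_eq_norm]
      linarith
    -- a.e. bound
    have hae : ∀ᵐ x ∂(volume : Measure (Fin K → ℝ)), g x ^ 2 * p x ≤ δ * p x := by
      have hbadc : ∀ c ∈ t, c ∉ J →
          (volume : Measure (Fin K → ℝ)) {x | x ∈ Metric.ball c (r / 2) ∧ p x ≠ 0} = 0 := by
        intro c hct hcJ
        have hμball : μ (Metric.ball c (r / 2)) = 0 := by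
          by_contra h
          exact hcJ (Finset.mem_filter.2 ⟨hct, pos_iff_ne_zero.2 h⟩)
        rw [hμdef, withDensity_apply _ measurableSet_ball] at hμball
        have hz := (setLIntegral_eq_zero_iff measurableSet_ball
          hp_meas.ennreal_ofReal).1 hμball
        have h0 := ae_iff.1 hz
        refine measure_mono_null ?_ h0
        intro x hxS
        simp only [Set.mem_setOf_eq] at hxS ⊢
        intro h
        exact hxS.2 (le_antisymm (ENNReal.ofReal_eq_zero.1 (h hxS.1)) (hp_nonneg x))
      have hbig : ∀ᵐ x ∂(volume : Measure (Fin K → ℝ)),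
          ∀ c ∈ t, c ∉ J → ¬(x ∈ Metric.ball c (r / 2) ∧ p x ≠ 0) := by
        rw [Filter.eventually_all_finset]
        intro c hct
        by_cases hcJ : c ∈ J
        · filter_upwards with x h; exact absurd hcJ h
        · have := measure_eq_zero_iff_ae_notMem.1 (hbadc c hct hcJ)
          filter_upwards [this] with x hx _
          exact hx
      filter_upwards [hbig] with x hx
      rcases eq_or_ne (p x) 0 with hp0 | hp0
      · simp [hp0]
      · -- x is in the cube
        have hcube : x ∈ Set.univ.pi fun _ : Fin K => Set.Icc (-U) U := by
          intro k _
          rw [Set.mem_Icc, ← abs_le]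
          by_contra habs
          exact hp0 (hp_supp x ⟨k, not_le.1 habs⟩)
        obtain ⟨c, hcmem⟩ := Set.mem_iUnion.1 (ht hcube)
        simp only [Set.mem_iUnion] at hcmem
        obtain ⟨hct, hxc⟩ := hcmem
        have hcJ : c ∈ J := by
          by_contra hcJ
          exact hx c hct hcJ ⟨hxc, hp0⟩
        obtain ⟨i, hi⟩ := hgood c hcJ
        have hdist : dist x (xs i) < r := by
          calc dist x (xs i) ≤ dist x c + dist c (xs i) := dist_triangle _ _ _
            _ < r / 2 + r / 2 := by
                have h1 := Metric.mem_ball.1 hxc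
                have h2 := Metric.mem_ball.1 hi
                rw [dist_comm c (xs i)]
                exact add_lt_add h1 h2
            _ = r := by ring
        have hgz : g (xs i) = 0 := by
          simp [hgdef, hinterp N xs i]
        have hgx : |g x| ≤ M * r := by
          have := hglip x (xs i)
          rw [hgz, sub_zero] at this
          calc |g x| ≤ M * dist x (xs i) := this
            _ ≤ M * r := mul_le_mul_of_nonneg_left hdist.le hM.le
        have hMr : M * r = Real.sqrt δ := by
          rw [hrdef]
          field_simp
        have hsq : g x ^ 2 ≤ δ := by
          have h1 : g x ^ 2 ≤ (M * r) ^ 2 := by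
            have := abs_le.1 hgx
            nlinarith [sq_abs (g x)]
          rw [hMr, Real.sq_sqrt hδ.le] at h1
          exact h1
        exact mul_le_mul_of_nonneg_right hsq (hp_nonneg x)
    have hmeas : AEStronglyMeasurable (fun x => g x ^ 2 * p x)
        (volume : Measure (Fin K → ℝ)) :=
      (((hcont.pow 2).measurable).mul hp_meas).aestronglyMeasurable
    have hint : Integrable (fun x => g x ^ 2 * p x) (volume : Measure (Fin K → ℝ)) := by
      refine Integrable.mono' (hp_int.const_mul ((2 * H) ^ 2)) hmeas ?_
      filter_upwards with x
      rw [Real.norm_eq_abs, abs_mul, abs_of_nonneg (hp_nonneg x), abs_of_nonneg (sq_nonneg _)]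
      refine mul_le_mul_of_nonneg_right ?_ (hp_nonneg x)
      nlinarith [hgH x, abs_nonneg (g x), sq_abs (g x)]
    calc (∫ x : Fin K → ℝ, g x ^ 2 * p x)
        ≤ ∫ x : Fin K → ℝ, δ * p x := integral_mono_ae hint (hp_int.const_mul δ) hae
      _ = δ := by rw [integral_const_mul, hp_one, mul_one]
  -- containment in union of "missed ball" events
  have hsub : ∀ N : ℕ, {xs : Fin N → Fin K → ℝ |
        δ < ∫ x : Fin K → ℝ, (fhat N xs x - f x) ^ 2 * p x}
      ⊆ ⋃ c ∈ J, {xs : Fin N → Fin K → ℝ | ∀ i, xs i ∉ Metric.ball c (r / 2)} := by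
    intro N xs hxs
    simp only [Set.mem_setOf_eq] at hxs
    by_contra hmem
    simp only [Set.mem_iUnion, Set.mem_setOf_eq, not_exists, not_forall, not_not] at hmem
    exact absurd (hkey N xs fun c hc => hmem c hc) (not_le.2 hxs)
  have hbound : ∀ N : ℕ,
      (Measure.pi fun _ : Fin N => μ) {xs : Fin N → Fin K → ℝ |
        δ < ∫ x : Fin K → ℝ, (fhat N xs x - f x) ^ 2 * p x}
      ≤ ∑ c ∈ J, (μ ((Metric.ball c (r / 2))ᶜ)) ^ N := by
    intro N
    refine (measure_mono (hsub N)).trans ?_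
    refine (measure_biUnion_finset_le _ _).trans ?_
    refine Finset.sum_le_sum fun c _ => ?_
    have hset : {xs : Fin N → Fin K → ℝ | ∀ i, xs i ∉ Metric.ball c (r / 2)}
        = Set.pi Set.univ fun _ : Fin N => (Metric.ball c (r / 2))ᶜ := by
      ext xs
      simp [Set.mem_pi]
    rw [hset, Measure.pi_pi]
    simp
  have hlim : Filter.Tendsto
      (fun N : ℕ => ∑ c ∈ J, (μ ((Metric.ball c (r / 2))ᶜ)) ^ N)
      Filter.atTop (nhds 0) := by
    have h0 : (0 : ENNReal) = ∑ c ∈ J, (0 : ENNReal) := by simp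
    rw [h0]
    refine tendsto_finset_sum _ fun c hc => ?_
    refine ENNReal.tendsto_pow_atTop_nhds_zero_of_lt_one ?_
    have hpos : 0 < μ (Metric.ball c (r / 2)) := (Finset.mem_filter.1 hc).2
    rw [prob_compl_eq_one_sub measurableSet_ball]
    exact ENNReal.sub_lt_self ENNReal.one_ne_top one_ne_zero (ne_of_gt hpos)
  exact tendsto_of_tendsto_of_tendsto_of_le_of_le tendsto_const_nhds hlim
    (fun N => zero_le) hbound
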